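/- (Bias of the OME-EIB estimator.) Under the OME recommendation setup, the bias of the OME-EIB estimator equals (1/|D|)·| Σ_{(u,i)∈D} (1 − p_{u,i})·ē_{u,i} + Σ_{(u,i): r*_{u,i}=1} [ (p_{u,i}·ω11 − 1)·ℓ_{u,i}(1) + p_{u,i}·ω01·ℓ_{u,i}(0) ] + Σ_{(u,i): r*_{u,i}=0} [ p_{u,i}·ω10·ℓ_{u,i}(1) + (p_{u,i}·ω00 − 1)·ℓ_{u,i}(0) ] |, where ω11 = (1−ρ01−ρ̂10)/(1−ρ̂01−ρ̂10), ω01 = (ρ01−ρ̂01)/(1−ρ̂01−ρ̂10), ω10 = (ρ10−ρ̂10)/(1−ρ̂01−ρ̂10), ω00 = (1−ρ̂01−ρ10)/(1−ρ̂01−ρ̂10). -/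

import Mathlib

/-!
Under product weights whose per-coordinate weights sum to one, a function of a single coordinate
averages against that coordinate's marginal alone, since every other factor sums to one. By
linearity the expectation of the estimator is therefore `(1/|D|) ∑ ((1 - p) ē + p (q ℓ̃(1) + (1 - q) ℓ̃(0)))`
with `q = P(r = 1)`; substituting `q = 1 - ρ01` resp. `q = ρ10` produces the coefficients `ω`.
-/

open Finset

/-- Expectation of a functional `g` of jointly independent families of Bernoulli random
variables `o d ~ Bernoulli (p d)` (observation indicators) and `r d ~ Bernoulli (q d)`
(observed ratings), encoded as a weighted sum over all realizations. -/
noncomputable def expectOR {D : Type*} [Fintype D] [DecidableEq D] (p q : D → ℝ)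
    (g : (D → Bool) → (D → Bool) → ℝ) : ℝ :=
  ∑ o : D → Bool, ∑ r : D → Bool,
    ((∏ d, (if o d then p d else 1 - p d)) * (∏ d, (if r d then q d else 1 - q d))) * g o r

section ProductWeights

variable {D α β R : Type*} [Fintype D] [DecidableEq D] [Fintype α] [Fintype β] [CommSemiring R]

theorem sum_prod_mul_eval (w : D → α → R) (hw : ∀ d, ∑ a, w d a = 1) (d₀ : D) (φ : α → R) :
    ∑ f : D → α, (∏ d, w d (f d)) * φ (f d₀) = ∑ a, w d₀ a * φ a := by
  set v : D → α → R := Function.update w d₀ fun a => w d₀ a * φ a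
  have hv : ∀ f : D → α, (∏ d, w d (f d)) * φ (f d₀) = ∏ d, v d (f d) := by
    intro f
    rw [← mul_prod_erase univ _ (mem_univ d₀), ← mul_prod_erase univ _ (mem_univ d₀)]
    have hv_ne : ∀ d ∈ univ.erase d₀, v d (f d) = w d (f d) := fun d hd => by
      simp [v, Function.update_of_ne (ne_of_mem_erase hd)]
    simp only [prod_congr rfl hv_ne, v, Function.update_self]
    ring
  simp_rw [hv, ← Fintype.prod_sum]
  rw [Fintype.prod_eq_single d₀ fun d hd => by simp [v, Function.update_of_ne hd, hw]]
  simp [v]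

theorem sum_sum_prod_mul_prod_mul_eval₂ (w : D → α → R) (w' : D → β → R)
    (hw : ∀ d, ∑ a, w d a = 1) (hw' : ∀ d, ∑ b, w' d b = 1) (d₀ : D) (F : α → β → R) :
    ∑ f : D → α, ∑ g : D → β, ((∏ d, w d (f d)) * ∏ d, w' d (g d)) * F (f d₀) (g d₀) =
      ∑ a, w d₀ a * ∑ b, w' d₀ b * F a b := by
  simp_rw [mul_assoc, ← mul_sum, sum_prod_mul_eval w' hw' d₀]
  exact sum_prod_mul_eval w hw d₀ fun a => ∑ b, w' d₀ b * F a b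

end ProductWeights

section Expectation

variable {D : Type*} [Fintype D] [DecidableEq D] (p q : D → ℝ)

theorem expectOR_const_mul (c : ℝ) (g : (D → Bool) → (D → Bool) → ℝ) :
    expectOR p q (fun o r => c * g o r) = c * expectOR p q g := by
  simp only [expectOR, mul_sum]
  exact sum_congr rfl fun o _ => sum_congr rfl fun r _ => mul_left_comm _ _ _

theorem expectOR_sum_coordinatewise (G : D → Bool → Bool → ℝ) :
    expectOR p q (fun o r => ∑ d, G d (o d) (r d)) =
      ∑ d, (p d * (q d * G d true true + (1 - q d) * G d true false) +
        (1 - p d) * (q d * G d false true + (1 - q d) * G d false false)) := by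
  have hw : ∀ (s : D → ℝ) d, ∑ b : Bool, (if b then s d else 1 - s d) = 1 := by simp
  simp only [expectOR, mul_sum]
  rw [sum_comm_cycle]
  refine sum_congr rfl fun d _ => ?_
  rw [sum_sum_prod_mul_prod_mul_eval₂ (fun d b => if b then p d else 1 - p d)
    (fun d b => if b then q d else 1 - q d) (hw p) (hw q) d (G d)]
  simp

end Expectation

theorem bias_OME_EIB_general {D : Type*} [Fintype D] [DecidableEq D]
    (rstar : D → Bool) (l : D → Bool → ℝ) (p ebar : D → ℝ)
    (ρ01 ρ10 ρh01 ρh10 : ℝ) :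
    |expectOR p (fun d => if rstar d then 1 - ρ01 else ρ10)
        (fun o r => (1 / (Fintype.card D : ℝ)) * ∑ d,
          ((1 - (if o d then (1 : ℝ) else 0)) * ebar d +
            (if o d then (1 : ℝ) else 0) *
              (if r d then ((1 - ρh10) * l d true - ρh01 * l d false) / (1 - ρh01 - ρh10)
               else ((1 - ρh01) * l d false - ρh10 * l d true) / (1 - ρh01 - ρh10)))) -
        (1 / (Fintype.card D : ℝ)) * ∑ d, l d (rstar d)| =
      (1 / (Fintype.card D : ℝ)) *
        |(∑ d, (1 - p d) * ebar d) +
          (∑ d ∈ univ.filter (fun d => rstar d = true),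
            ((p d * ((1 - ρ01 - ρh10) / (1 - ρh01 - ρh10)) - 1) * l d true +
              p d * ((ρ01 - ρh01) / (1 - ρh01 - ρh10)) * l d false)) +
          (∑ d ∈ univ.filter (fun d => rstar d = false),
            (p d * ((ρ10 - ρh10) / (1 - ρh01 - ρh10)) * l d true +
              (p d * ((1 - ρh01 - ρ10) / (1 - ρh01 - ρh10)) - 1) * l d false))| := by
  rw [expectOR_const_mul, expectOR_sum_coordinatewise _ _ fun d a b =>
    (1 - if a then (1 : ℝ) else 0) * ebar d + (if a then (1 : ℝ) else 0) *
      if b then ((1 - ρh10) * l d true - ρh01 * l d false) / (1 - ρh01 - ρh10)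
      else ((1 - ρh01) * l d false - ρh10 * l d true) / (1 - ρh01 - ρh10)]
  rw [← mul_sub, abs_mul, abs_of_nonneg (by positivity)]
  congr 2
  rw [sum_filter, sum_filter, ← sum_sub_distrib, ← sum_add_distrib, ← sum_add_distrib]
  refine sum_congr rfl fun d _ => ?_
  cases rstar d <;> simp only [Bool.false_eq_true, Bool.true_eq_false, ↓reduceIte] <;> ring

/-- **Bias of the OME-EIB estimator.** Under the OME recommendation setup,
with true ratings `rstar`, losses `l d true = ℓ_{u,i}(1)` and `l d false = ℓ_{u,i}(0)`,
true propensities `p`, imputed errors `ebar`, true error rates `ρ01, ρ10` and estimated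
error rates `ρh01, ρh10`, the bias `|E[ε_OME-EIB] − P*|` of the OME-EIB estimator has
the stated explicit form. -/
theorem bias_OME_EIB {D : Type*} [Fintype D] [DecidableEq D] [Nonempty D]
    (rstar : D → Bool) (l : D → Bool → ℝ) (p ebar : D → ℝ)
    (ρ01 ρ10 ρh01 ρh10 : ℝ)
    (hp0 : ∀ d, 0 < p d) (hp1 : ∀ d, p d ≤ 1)
    (h01 : 0 ≤ ρ01) (h10 : 0 ≤ ρ10) (hsum : ρ01 + ρ10 < 1)
    (hh01 : 0 ≤ ρh01) (hh10 : 0 ≤ ρh10) (hhsum : ρh01 + ρh10 < 1) :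
    |expectOR p (fun d => if rstar d then 1 - ρ01 else ρ10)
        (fun o r => (1 / (Fintype.card D : ℝ)) * ∑ d,
          ((1 - (if o d then (1 : ℝ) else 0)) * ebar d +
            (if o d then (1 : ℝ) else 0) *
              (if r d then ((1 - ρh10) * l d true - ρh01 * l d false) / (1 - ρh01 - ρh10)
               else ((1 - ρh01) * l d false - ρh10 * l d true) / (1 - ρh01 - ρh10)))) -
        (1 / (Fintype.card D : ℝ)) * ∑ d, l d (rstar d)| =
      (1 / (Fintype.card D : ℝ)) *
        |(∑ d, (1 - p d) * ebar d) +
          (∑ d ∈ univ.filter (fun d => rstar d = true),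
            ((p d * ((1 - ρ01 - ρh10) / (1 - ρh01 - ρh10)) - 1) * l d true +
              p d * ((ρ01 - ρh01) / (1 - ρh01 - ρh10)) * l d false)) +
          (∑ d ∈ univ.filter (fun d => rstar d = false),
            (p d * ((ρ10 - ρh10) / (1 - ρh01 - ρh10)) * l d true +
              (p d * ((1 - ρh01 - ρ10) / (1 - ρh01 - ρh10)) - 1) * l d false))| :=
  bias_OME_EIB_general rstar l p ebar ρ01 ρ10 ρh01 ρh10
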